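/- Let z ∈ D and g ∈ G∖G_∞ with g = n₁σma_t n₂. Then height(z) = (ρ(z, g^{-1}∞)/R(g))⁴ · height(gz), where height(ζ,v) = Re ζ − ¼|v|² and R(g) = t^{-1/4}. Consequently, z lies in the interior of the isometric sphere I(g) if and only if height(gz) > height(z). -/

import Mathlib

/-!
The elements of `N` and `M` preserve the height, `a_t` multiplies it by `t`, and the inversion
`σ` divides it by `‖ζ‖²`. Hence `height (g z) = height z / (t ‖ζ‖²)`, where `(ζ, v) = n₂ z`.
On the other side, `g⁻¹∞ = n₂⁻¹ 0`, so `ρ(z, g⁻¹∞)⁴ = ‖ζ‖²`, while `R(g)⁴ = t⁻¹`.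
-/

open RealInnerProductSpace

noncomputable section

/-- Conjugation in `C` relative to the unit element `e`: `conj ζ = 2⟪ζ,e⟫·e − ζ`. -/
def conjC {C : Type*} [NormedAddCommGroup C] [InnerProductSpace ℝ C] (e ζ : C) : C :=
  (2 * ⟪ζ, e⟫) • e - ζ

/-- The inverse `ζ⁻¹ = ‖ζ‖⁻²·conj ζ` in `C`. -/
def cinvC {C : Type*} [NormedAddCommGroup C] [InnerProductSpace ℝ C] (e ζ : C) : C :=
  (‖ζ‖ ^ 2)⁻¹ • conjC e ζ

/-- Height function on the Siegel domain `D ⊂ C ⊕ V`: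
`height (ζ, v) = Re ζ − ¼‖v‖²` with `Re ζ = ⟪ζ, e⟫`. -/
def heightD {C V : Type*} [NormedAddCommGroup C] [InnerProductSpace ℝ C]
    [NormedAddCommGroup V] (e : C) (p : C × V) : ℝ :=
  ⟪p.1, e⟫ - (1/4) * ‖p.2‖ ^ 2

/-- Imaginary part `Im ζ = ζ − ⟪ζ,e⟫·e` in `C`. -/
def imC {C : Type*} [NormedAddCommGroup C] [InnerProductSpace ℝ C] (e ζ : C) : C :=
  ζ - ⟪ζ, e⟫ • e

/-- The Cygan metric on `D̄ ∖ {∞}` in `C ⊕ V` coordinates: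
`ρ((ζ₁,v₁),(ζ₂,v₂)) = |¼|v₁|² + ¼|v₂|² + |height z₁ − height z₂| + Im ζ₁ − Im ζ₂
 − ½ β₂(v₁,v₂)|^{1/2}`. -/
def cyganD {C V : Type*} [NormedAddCommGroup C] [InnerProductSpace ℝ C]
    [NormedAddCommGroup V] (e : C) (β₂ : V → V → C) (p q : C × V) : ℝ :=
  Real.sqrt ‖((1/4) * ‖p.2‖ ^ 2 + (1/4) * ‖q.2‖ ^ 2 + |heightD e p - heightD e q|) • e
      + imC e p.1 - imC e q.1 - (1/2 : ℝ) • β₂ p.2 q.2‖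

/-- Action of `n_{(Z,X)} ∈ N` on `C ⊕ V` coordinates:
`n(ζ,v) = (¼|X|² + Z + ζ + ½β₂(v,X), X + v)`. -/
def nAct {C V : Type*} [NormedAddCommGroup C] [InnerProductSpace ℝ C]
    [NormedAddCommGroup V] [Module ℝ V] (e : C) (β₂ : V → V → C) (Z : C) (X : V)
    (p : C × V) : C × V :=
  (((1/4) * ‖X‖ ^ 2) • e + Z + p.1 + (1/2 : ℝ) • β₂ p.2 X, X + p.2)

/-- Action of `a_t ∈ A`: `a_t(ζ,v) = (tζ, t^{1/2} v)`. -/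
def aAct {C V : Type*} [NormedAddCommGroup C] [InnerProductSpace ℝ C]
    [NormedAddCommGroup V] [Module ℝ V] (t : ℝ) (p : C × V) : C × V :=
  (t • p.1, Real.sqrt t • p.2)

/-- Action of `m = (φ,ψ) ∈ M`: `m(ζ,v) = (φζ, ψv)`. -/
def mAct {C V : Type*} [NormedAddCommGroup C] [InnerProductSpace ℝ C]
    [NormedAddCommGroup V] [Module ℝ V] (φ : C →ₗ[ℝ] C) (ψ : V →ₗ[ℝ] V)
    (p : C × V) : C × V :=
  (φ p.1, ψ p.2)

/-- The geodesic inversion `σ(ζ,v) = (ζ⁻¹, −ζ⁻¹ v)` in `C ⊕ V` coordinates. -/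
def sigmaAct {C V : Type*} [NormedAddCommGroup C] [InnerProductSpace ℝ C]
    [NormedAddCommGroup V] [InnerProductSpace ℝ V] (e : C)
    (J : C →ₗ[ℝ] V →ₗ[ℝ] V) (p : C × V) : C × V :=
  (cinvC e p.1, - J (cinvC e p.1) p.2)

section SiegelDomain

variable {C V : Type*} [NormedAddCommGroup C] [InnerProductSpace ℝ C] [NormedAddCommGroup V]
  {e : C}

lemma inner_conjC (he : ‖e‖ = 1) (ζ : C) : ⟪conjC e ζ, e⟫ = ⟪ζ, e⟫ := by
  simp only [conjC, inner_sub_left, real_inner_smul_left, real_inner_self_eq_norm_sq, he]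
  ring

lemma norm_conjC (he : ‖e‖ = 1) (ζ : C) : ‖conjC e ζ‖ = ‖ζ‖ := by
  refine (sq_eq_sq₀ (norm_nonneg _) (norm_nonneg _)).mp ?_
  rw [conjC, norm_sub_sq_real, norm_smul, real_inner_smul_left, real_inner_comm e ζ, he,
    Real.norm_eq_abs, mul_one, sq_abs]
  ring

lemma norm_fst_pos_of_heightD_pos (he : ‖e‖ = 1) {p : C × V} (hp : 0 < heightD e p) :
    0 < ‖p.1‖ := by
  have hre : ⟪p.1, e⟫ ≤ ‖p.1‖ := by simpa [he] using real_inner_le_norm p.1 e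
  have : 0 ≤ ‖p.2‖ ^ 2 := sq_nonneg _
  rw [heightD] at hp
  linarith

lemma heightD_nAct [InnerProductSpace ℝ V] {J : C →ₗ[ℝ] V →ₗ[ℝ] V} (he : ‖e‖ = 1)
    (hJe : ∀ v : V, J e v = v) {β₂ : V → V → C} (hβ : ∀ (v u : V) (ζ : C), ⟪β₂ v u, ζ⟫ = ⟪J ζ u, v⟫)
    {Z : C} (hZ : ⟪Z, e⟫ = 0) (X : V) (p : C × V) :
    heightD e (nAct e β₂ Z X p) = heightD e p := by
  simp only [heightD, nAct, norm_add_sq_real, inner_add_left, real_inner_smul_left, hZ, hβ,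
    hJe, real_inner_self_eq_norm_sq, he]
  ring

lemma heightD_aAct [NormedSpace ℝ V] {t : ℝ} (ht : 0 ≤ t) (p : C × V) :
    heightD e (aAct t p) = t * heightD e p := by
  simp only [heightD, aAct, real_inner_smul_left, norm_smul, Real.norm_eq_abs,
    abs_of_nonneg (Real.sqrt_nonneg t), mul_pow, Real.sq_sqrt ht]
  ring

lemma heightD_mAct [NormedSpace ℝ V] {φ : C →ₗ[ℝ] C} {ψ : V →ₗ[ℝ] V}
    (hφ : ∀ ζ : C, ‖φ ζ‖ = ‖ζ‖) (hψ : ∀ v : V, ‖ψ v‖ = ‖v‖) (hφe : φ e = e) (p : C × V) :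
    heightD e (mAct φ ψ p) = heightD e p := by
  have hinner := (⟨φ, hφ⟩ : C →ₗᵢ[ℝ] C).inner_map_map p.1 e
  simp only [LinearIsometry.coe_mk, hφe] at hinner
  simp only [heightD, mAct, hinner, hψ]

lemma heightD_sigmaAct [InnerProductSpace ℝ V] (he : ‖e‖ = 1) {J : C →ₗ[ℝ] V →ₗ[ℝ] V}
    (hnorm : ∀ (ζ : C) (v : V), ‖J ζ v‖ = ‖ζ‖ * ‖v‖) {p : C × V} (hp : p.1 ≠ 0) :
    heightD e (sigmaAct e J p) = (‖p.1‖ ^ 2)⁻¹ * heightD e p := by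
  have h0 : ‖p.1‖ ≠ 0 := norm_ne_zero_iff.mpr hp
  simp only [heightD, sigmaAct, norm_neg, hnorm, cinvC, norm_smul, real_inner_smul_left,
    inner_conjC he, norm_conjC he, norm_inv, norm_pow, norm_norm]
  field_simp

end SiegelDomain

section CyganMetric

variable {C V : Type*} [NormedAddCommGroup C] [InnerProductSpace ℝ C]
  [NormedAddCommGroup V] [InnerProductSpace ℝ V] {e : C} {J : C →ₗ[ℝ] V →ₗ[ℝ] V}
  {β₂ : V → V → C}

lemma apply_neg_right_of_inner_eq (hβ : ∀ (v u : V) (ζ : C), ⟪β₂ v u, ζ⟫ = ⟪J ζ u, v⟫)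
    (v u : V) : β₂ v (-u) = -β₂ v u :=
  ext_inner_right ℝ fun ζ => by rw [hβ, map_neg, inner_neg_left, inner_neg_left, hβ]

/-- The point `(¼‖X‖²e − Z, −X)` is `n_{(Z,X)}⁻¹ 0`, and `ρ((ζ, v), 0)² = ‖ζ‖`. -/
lemma cyganD_eq_sqrt_norm_nAct_fst (he : ‖e‖ = 1)
    (hβ : ∀ (v u : V) (ζ : C), ⟪β₂ v u, ζ⟫ = ⟪J ζ u, v⟫) {Z : C} (hZ : ⟪Z, e⟫ = 0) (X : V)
    {z : C × V} (hz : 0 ≤ heightD e z) :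
    cyganD e β₂ z (((1/4) * ‖X‖ ^ 2) • e - Z, -X) = √‖(nAct e β₂ Z X z).1‖ := by
  have hc : heightD e (((1/4) * ‖X‖ ^ 2) • e - Z, -X) = 0 := by
    simp [heightD, inner_sub_left, real_inner_smul_left, hZ, he]
  simp only [cyganD, hc, sub_zero, abs_of_nonneg hz]
  congr 2
  simp only [imC, heightD, nAct, apply_neg_right_of_inner_eq hβ, inner_sub_left,
    real_inner_smul_left, real_inner_self_eq_norm_sq, he, hZ, norm_neg]
  match_scalars <;> ring

lemma heightD_nAct_sigmaAct_mAct_aAct_nAct (he : ‖e‖ = 1) (hJe : ∀ v : V, J e v = v)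
    (hnorm : ∀ (ζ : C) (v : V), ‖J ζ v‖ = ‖ζ‖ * ‖v‖)
    (hβ : ∀ (v u : V) (ζ : C), ⟪β₂ v u, ζ⟫ = ⟪J ζ u, v⟫) {t : ℝ} (ht : 0 < t)
    {Z₁ Z₂ : C} (X₁ X₂ : V) (hZ₁ : ⟪Z₁, e⟫ = 0) (hZ₂ : ⟪Z₂, e⟫ = 0)
    {φ : C →ₗ[ℝ] C} {ψ : V →ₗ[ℝ] V} (hφ : ∀ ζ : C, ‖φ ζ‖ = ‖ζ‖) (hψ : ∀ v : V, ‖ψ v‖ = ‖v‖)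
    (hφe : φ e = e) {p : C × V} (hp : (nAct e β₂ Z₂ X₂ p).1 ≠ 0) :
    heightD e (nAct e β₂ Z₁ X₁ (sigmaAct e J (mAct φ ψ (aAct t (nAct e β₂ Z₂ X₂ p))))) =
      (t * ‖(nAct e β₂ Z₂ X₂ p).1‖ ^ 2)⁻¹ * heightD e p := by
  set q := nAct e β₂ Z₂ X₂ p
  have hq : ‖(mAct φ ψ (aAct t q)).1‖ = t * ‖q.1‖ := by
    simp only [mAct, aAct, map_smul, norm_smul, hφ, Real.norm_eq_abs, abs_of_pos ht]
  have hq0 : (mAct φ ψ (aAct t q)).1 ≠ 0 := by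
    rw [← norm_ne_zero_iff, hq]
    exact mul_ne_zero ht.ne' (norm_ne_zero_iff.mpr hp)
  rw [heightD_nAct he hJe hβ hZ₁, heightD_sigmaAct he hnorm hq0, hq, heightD_mAct hφ hψ hφe,
    heightD_aAct ht.le, heightD_nAct he hJe hβ hZ₂]
  field_simp

end CyganMetric

lemma lt_iff_lt_of_eq_div_pow_mul {ρ R a b : ℝ} {n : ℕ} (hn : n ≠ 0) (hρ : 0 ≤ ρ) (hR : 0 < R)
    (hb : 0 < b) (h : a = (ρ / R) ^ n * b) : ρ < R ↔ a < b := by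
  rw [h, mul_lt_iff_lt_one_left hb, pow_lt_one_iff_of_nonneg (div_nonneg hρ hR.le) hn,
    div_lt_one hR]

theorem height_transformation_general
    {C V : Type*} [NormedAddCommGroup C] [InnerProductSpace ℝ C]
    [NormedAddCommGroup V] [InnerProductSpace ℝ V]
    (e : C) (J : C →ₗ[ℝ] V →ₗ[ℝ] V) (he : ‖e‖ = 1)
    (hJe : ∀ v : V, J e v = v)
    (hnorm : ∀ (ζ : C) (v : V), ‖J ζ v‖ = ‖ζ‖ * ‖v‖)
    (β₂ : V → V → C)
    (hβ : ∀ (v u : V) (ζ : C), ⟪β₂ v u, ζ⟫ = ⟪J ζ u, v⟫)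
    (t : ℝ) (ht : 0 < t)
    (Z₁ Z₂ : C) (X₁ X₂ : V) (hZ₁ : ⟪Z₁, e⟫ = 0) (hZ₂ : ⟪Z₂, e⟫ = 0)
    (φ : C →ₗ[ℝ] C) (ψ : V →ₗ[ℝ] V)
    (hφ : ∀ ζ : C, ‖φ ζ‖ = ‖ζ‖) (hψ : ∀ v : V, ‖ψ v‖ = ‖v‖) (hφe : φ e = e)
    (g : C × V → C × V)
    (hg : ∀ p : C × V,
      g p = nAct e β₂ Z₁ X₁ (sigmaAct e J (mAct φ ψ (aAct t (nAct e β₂ Z₂ X₂ p)))))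
    (c : C × V) (hc : c = (((1/4) * ‖X₂‖ ^ 2) • e - Z₂, - X₂))
    (z : C × V) (hz : (1/4) * ‖z.2‖ ^ 2 < ⟪z.1, e⟫) :
    heightD e z = (cyganD e β₂ z c / t ^ (-(1/4) : ℝ)) ^ 4 * heightD e (g z) ∧
    (cyganD e β₂ z c < t ^ (-(1/4) : ℝ) ↔ heightD e z < heightD e (g z)) := by
  set w := (nAct e β₂ Z₂ X₂ z).1
  have hz₀ : 0 < heightD e z := sub_pos.mpr hz
  have hw : 0 < ‖w‖ :=
    norm_fst_pos_of_heightD_pos he ((heightD_nAct he hJe hβ hZ₂ X₂ z).symm ▸ hz₀)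
  have hgz : heightD e (g z) = (t * ‖w‖ ^ 2)⁻¹ * heightD e z := by
    rw [hg, heightD_nAct_sigmaAct_mAct_aAct_nAct he hJe hnorm hβ ht X₁ X₂ hZ₁ hZ₂ hφ hψ hφe
      (norm_pos_iff.mp hw)]
  have hρ : cyganD e β₂ z c = √‖w‖ := hc ▸ cyganD_eq_sqrt_norm_nAct_fst he hβ hZ₂ X₂ hz₀.le
  have hquot : (cyganD e β₂ z c / t ^ (-(1/4) : ℝ)) ^ 4 = t * ‖w‖ ^ 2 := by
    have hR : (t ^ (-(1/4) : ℝ)) ^ 4 = t⁻¹ := by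
      rw [← Real.rpow_natCast, ← Real.rpow_mul ht.le]
      norm_num [Real.rpow_neg_one]
    rw [div_pow, hR, hρ, show 4 = 2 * 2 from rfl, pow_mul, Real.sq_sqrt (norm_nonneg _),
      div_inv_eq_mul, mul_comm]
  have hmain : heightD e z = (cyganD e β₂ z c / t ^ (-(1/4) : ℝ)) ^ 4 * heightD e (g z) := by
    rw [hquot, hgz]
    field_simp
  exact ⟨hmain, lt_iff_lt_of_eq_div_pow_mul four_ne_zero (hρ ▸ Real.sqrt_nonneg _)
    (Real.rpow_pos_of_pos ht _) (hgz ▸ by positivity) hmain⟩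

/-- for `z ∈ D` and `g = n₁ σ m a_t n₂ ∈ G ∖ G_∞`, one has
`height(z) = (ρ(z, g⁻¹∞)/R(g))⁴ · height(gz)` with `R(g) = t^{-1/4}` and
`g⁻¹∞ = n₂⁻¹ 0 = (¼|X₂|² − Z₂, −X₂)`; consequently `z` lies in the interior of
the isometric sphere `I(g)` iff `height(gz) > height(z)`. -/
theorem height_transformation
    {C V : Type*} [NormedAddCommGroup C] [InnerProductSpace ℝ C] [FiniteDimensional ℝ C]
    [NormedAddCommGroup V] [InnerProductSpace ℝ V] [FiniteDimensional ℝ V]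
    (e : C) (J : C →ₗ[ℝ] V →ₗ[ℝ] V) (he : ‖e‖ = 1)
    (hJe : ∀ v : V, J e v = v)
    (hnorm : ∀ (ζ : C) (v : V), ‖J ζ v‖ = ‖ζ‖ * ‖v‖)
    (hJ2 : ∀ (ζ η : C) (v : V), ∃ τ : C, J ζ (J η v) = J τ v)
    (β₂ : V → V → C)
    (hβ : ∀ (v u : V) (ζ : C), ⟪β₂ v u, ζ⟫ = ⟪J ζ u, v⟫)
    (t : ℝ) (ht : 0 < t)
    (Z₁ Z₂ : C) (X₁ X₂ : V) (hZ₁ : ⟪Z₁, e⟫ = 0) (hZ₂ : ⟪Z₂, e⟫ = 0)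
    (φ : C →ₗ[ℝ] C) (ψ : V →ₗ[ℝ] V)
    (hφ : ∀ ζ : C, ‖φ ζ‖ = ‖ζ‖) (hψ : ∀ v : V, ‖ψ v‖ = ‖v‖) (hφe : φ e = e)
    (hm : ∀ (ζ : C) (v : V), ψ (J ζ v) = J (φ ζ) (ψ v))
    (g : C × V → C × V)
    (hg : ∀ p : C × V,
      g p = nAct e β₂ Z₁ X₁ (sigmaAct e J (mAct φ ψ (aAct t (nAct e β₂ Z₂ X₂ p)))))
    (c : C × V) (hc : c = (((1/4) * ‖X₂‖ ^ 2) • e - Z₂, - X₂))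
    (z : C × V) (hz : (1/4) * ‖z.2‖ ^ 2 < ⟪z.1, e⟫) :
    heightD e z = (cyganD e β₂ z c / t ^ (-(1/4) : ℝ)) ^ 4 * heightD e (g z) ∧
    (cyganD e β₂ z c < t ^ (-(1/4) : ℝ) ↔ heightD e z < heightD e (g z)) :=
  height_transformation_general e J he hJe hnorm β₂ hβ t ht Z₁ Z₂ X₁ X₂ hZ₁ hZ₂ φ ψ hφ hψ hφe g hg c
    hc z hz

end
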